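/- arXiv:math/0112103 — 4 statements merged into one kernel-verified Lean document; each statement's English description precedes it below -/
import Mathlib

section
/- Let m = (m_{ij}(x)) be a family of d×d matrices of positive reals depending on x ∈ [0,1], let β̄ be a direction matrix satisfying β̄'_{ij} = b l_i m_{ij}(y) r_j where l, r are positive left/right eigenvectors of m(y) for the eigenvalue ρ(y) and b = (ρ(y)⟨l,r⟩)^{-1}, i.e., β̄ is a fixed point of the map S at the point y where φ(·, β̄) attains its minimum. Then φ(y, β̄) = ρ(y), where φ(x, β) = ψ(β)·∏_{i,j} m_{ij}(x)^{β_{ij}} and ψ(β) = ∏_{i,k} ((∑_j β_{ij})/β_{ik})^{β_{ik}}. -/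
/-!
The fixed point `β̄` has equal `i`-th row and column sums, namely `ρ b lᵢ rᵢ`, and total mass
`ρ b ⟨l, r⟩ = 1`. Its row sums also turn each factor of `ψ(β̄)`, multiplied by `m_{ik}^{β̄_{ik}}`,
into `(ρ rᵢ / r_k)^{β̄_{ik}}`. Taking logarithms, the ratios `rᵢ / r_k` contribute
`∑_{i,k} β̄_{ik} (log rᵢ - log r_k) = ∑ᵢ (row sum - column sum) log rᵢ = 0`, leaving
`(∑ β̄) log ρ = log ρ`.
-/

open Finset

section
variable {ι : Type*} [Fintype ι]

lemma sum_sum_mul_sub_eq_zero_of_balanced {R : Type*} [CommRing R] {β : ι → ι → R}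
    (hbal : ∀ i, ∑ j, β i j = ∑ j, β j i) (f : ι → R) : ∑ i, ∑ j, β i j * (f i - f j) = 0 := by
  simp_rw [mul_sub, sum_sub_distrib, ← sum_mul, hbal]
  rw [sum_comm (f := fun i j => β i j * f j)]
  simp_rw [← sum_mul, sub_self]

lemma prod_prod_rpow_mul_div_eq_of_balanced {β : ι → ι → ℝ} {ρ : ℝ} {r : ι → ℝ}
    (hρ : 0 < ρ) (hr : ∀ i, 0 < r i) (htot : ∑ i, ∑ j, β i j = 1)
    (hbal : ∀ i, ∑ j, β i j = ∑ j, β j i) :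
    ∏ i, ∏ j, (ρ * r i / r j) ^ β i j = ρ := by
  have hpos : ∀ i j, 0 < ρ * r i / r j := fun i j => by
    have := hr i; have := hr j; positivity
  have hlog : ∀ i j, Real.log ((ρ * r i / r j) ^ β i j)
      = β i j * Real.log ρ + β i j * (Real.log (r i) - Real.log (r j)) := fun i j => by
    rw [Real.log_rpow (hpos i j), Real.log_div (mul_pos hρ (hr i)).ne' (hr j).ne',
      Real.log_mul hρ.ne' (hr i).ne']
    ring
  refine Real.log_injOn_pos
    (prod_pos fun i _ => prod_pos fun j _ => Real.rpow_pos_of_pos (hpos i j) _) hρ ?_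
  simp_rw [Real.log_prod fun i _ => (prod_pos fun j _ => Real.rpow_pos_of_pos (hpos i j) _).ne',
    Real.log_prod fun j _ => (Real.rpow_pos_of_pos (hpos _ j) _).ne', hlog, sum_add_distrib,
    ← sum_mul, htot, sum_sum_mul_sub_eq_zero_of_balanced hbal, one_mul, add_zero]

lemma rpow_div_mul_rpow_self {a m : ℝ} (ha : 0 ≤ a) (hm : 0 < m) (t : ℝ) :
    (a / m) ^ t * m ^ t = a ^ t := by
  rw [← Real.mul_rpow (div_nonneg ha hm.le) hm.le, div_mul_cancel₀ a hm.ne']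

end

theorem stmt_6_general (d : ℕ) (hd : 1 ≤ d) (m : ℝ → Fin d → Fin d → ℝ) (y : ℝ)
    (hm : ∀ i j, 0 < m y i j)
    (ρ : ℝ) (hρ : 0 < ρ) (l r : Fin d → ℝ)
    (hl : ∀ i, 0 < l i) (hr : ∀ i, 0 < r i)
    (hleft : ∀ j, ∑ i, l i * m y i j = ρ * l j)
    (hright : ∀ i, ∑ j, m y i j * r j = ρ * r i)
    (b : ℝ) (hb : b = (ρ * ∑ i, l i * r i)⁻¹)
    (β : Fin d → Fin d → ℝ) (hβ : ∀ i j, β i j = b * l i * m y i j * r j)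
    (ψ : ℝ) (hψ : ψ = ∏ i, ∏ k, ((∑ j, β i j) / β i k) ^ β i k) :
    ψ * ∏ i, ∏ j, m y i j ^ β i j = ρ := by
  have hlr : 0 < ∑ i, l i * r i :=
    sum_pos (fun i _ => mul_pos (hl i) (hr i)) ⟨⟨0, hd⟩, mem_univ _⟩
  have hb0 : b ≠ 0 := by rw [hb]; positivity
  have hrow : ∀ i, ∑ j, β i j = ρ * b * l i * r i := fun i => calc
    ∑ j, β i j = b * l i * ∑ j, m y i j * r j := by
      rw [mul_sum]; exact sum_congr rfl fun j _ => by rw [hβ]; ring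
    _ = ρ * b * l i * r i := by rw [hright]; ring
  have hcol : ∀ j, ∑ i, β i j = ρ * b * l j * r j := fun j => calc
    ∑ i, β i j = b * r j * ∑ i, l i * m y i j := by
      rw [mul_sum]; exact sum_congr rfl fun i _ => by rw [hβ]; ring
    _ = ρ * b * l j * r j := by rw [hleft]; ring
  have htot : ∑ i, ∑ j, β i j = 1 := by
    simp_rw [hrow, mul_assoc, ← mul_sum, hb]; field_simp
  have hentry : ∀ i k, ((∑ j, β i j) / β i k) ^ β i k * m y i k ^ β i k
      = (ρ * r i / r k) ^ β i k := fun i k => by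
    have hratio : (∑ j, β i j) / β i k = ρ * r i / r k / m y i k := by
      rw [hrow, hβ]; field_simp [hb0, (hl i).ne', (hm i k).ne', (hr k).ne']
    rw [hratio, rpow_div_mul_rpow_self (by have := hr i; have := hr k; positivity) (hm i k)]
  rw [hψ, ← prod_mul_distrib]
  simp_rw [← prod_mul_distrib, hentry]
  exact prod_prod_rpow_mul_div_eq_of_balanced hρ hr htot fun i => (hrow i).trans (hcol i).symm

/-- at a fixed point `β̄` of the map `S` (built from the positive
left/right Perron eigenvectors of `m(y)`), one has `φ(y, β̄) = ρ(y)`, where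
`φ(x,β) = ψ(β) ∏_{i,j} m_{ij}(x)^{β_{ij}}` and
`ψ(β) = ∏_{i,k} ((∑_j β_{ij})/β_{ik})^{β_{ik}}` (convention `0^0 = 1`, realised by
`Real.rpow`). -/
theorem stmt_6 (d : ℕ) (hd : 1 ≤ d) (m : ℝ → Fin d → Fin d → ℝ) (y : ℝ)
    (hy : y ∈ Set.Icc (0 : ℝ) 1) (hm : ∀ i j, 0 < m y i j)
    (ρ : ℝ) (hρ : 0 < ρ) (l r : Fin d → ℝ)
    (hl : ∀ i, 0 < l i) (hr : ∀ i, 0 < r i)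
    (hleft : ∀ j, ∑ i, l i * m y i j = ρ * l j)
    (hright : ∀ i, ∑ j, m y i j * r j = ρ * r i)
    (b : ℝ) (hb : b = (ρ * ∑ i, l i * r i)⁻¹)
    (β : Fin d → Fin d → ℝ) (hβ : ∀ i j, β i j = b * l i * m y i j * r j)
    (ψ : ℝ) (hψ : ψ = ∏ i, ∏ k, ((∑ j, β i j) / β i k) ^ β i k) :
    ψ * ∏ i, ∏ j, m y i j ^ β i j = ρ :=
  stmt_6_general d hd m y hm ρ hρ l r hl hr hleft hright b hb β hβ ψ hψ
end

section
/- Let (X_n) be a real-valued process adapted to a filtration (F_n) with X_0 = x, whose increments Y_n = X_n − X_{n−1} satisfy |Y_n| ≤ a almost surely for a constant a > 0, and which is a strong submartingale: E(Y_n | F_{n−1}) ≥ ε almost surely for some ε > 0 and all n. Then there exists δ₁ = δ₁(ε, a) > 0 such that for all 0 < δ < δ₁, the stopping time τ(δ) = inf{n ≥ 1 : X_n < x + nδ} satisfies P(τ(δ) = ∞) > 0. -/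
/-!
One-step Chernoff bound: if `|Y| ≤ a`, `0 ≤ b ≤ 1/a` and the conditional drift of `Y` is at
least `ε`, then `E[exp(-bY) | F] ≤ ρ := 1 - bε + b²a²`, and `b = ε/(2a²)` makes `ρ < 1`.
Hence `T n = ρ⁻ⁿ exp(-b (X n - x))` is a nonnegative supermartingale with `T 0 = 1`.
For `δ < ε/2` we still have `r := e^{bδ} ρ < 1`, and `X n < x + nδ` with `n ≥ 1` forces
`T n ≥ r⁻ⁿ ≥ r⁻¹`. By Ville's maximal inequality (optional stopping at the first such time)
this event has probability at most `r < 1`.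
-/

open MeasureTheory Real

lemma exp_neg_mul_le_of_abs_le {y a b : ℝ} (hy : |y| ≤ a) (hb : 0 ≤ b) (hba : b * a ≤ 1) :
    exp (-(b * y)) ≤ 1 + b ^ 2 * a ^ 2 - b * y := by
  have hby : |-(b * y)| ≤ b * a := by
    rw [abs_neg, abs_mul, abs_of_nonneg hb]; exact mul_le_mul_of_nonneg_left hy hb
  have hsq : (-(b * y)) ^ 2 ≤ b ^ 2 * a ^ 2 := by
    rw [← mul_pow, ← sq_abs]; exact pow_le_pow_left₀ (abs_nonneg _) hby 2
  have := (abs_le.1 (abs_exp_sub_one_sub_id_le (hby.trans hba))).2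
  linarith

lemma exists_chernoff_exponent {a ε : ℝ} (hε : 0 < ε) (hεa : ε ≤ a) :
    ∃ b > 0, b * a ≤ 1 ∧ 0 < 1 - b * ε + b ^ 2 * a ^ 2 ∧
      ∀ δ < ε / 2, exp (b * δ) * (1 - b * ε + b ^ 2 * a ^ 2) < 1 := by
  have ha : 0 < a := hε.trans_le hεa
  set b := ε / (2 * a ^ 2) with hb
  have hb_pos : 0 < b := by positivity
  have hbab : b * a ^ 2 = ε / 2 := by rw [hb]; field_simp
  have hba : b * a ≤ 1 / 2 := le_of_mul_le_mul_right (by nlinarith) ha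
  -- `b = ε/(2a²)` minimises `1 - bε + b²a²`, whose value there is `1 - bε/2`
  have hρ : 1 - b * ε + b ^ 2 * a ^ 2 = 1 - b * (ε / 2) := by
    linear_combination b * hbab
  refine ⟨b, hb_pos, by linarith, ?_, fun δ hδ => ?_⟩
  · nlinarith [mul_le_mul_of_nonneg_left hεa hb_pos.le]
  · have hρ_lt : 1 - b * ε + b ^ 2 * a ^ 2 < exp (-(b * δ)) :=
      lt_of_lt_of_le (by linarith [mul_lt_mul_of_pos_left hδ hb_pos]) (one_sub_le_exp_neg _)
    calc exp (b * δ) * (1 - b * ε + b ^ 2 * a ^ 2) < exp (b * δ) * exp (-(b * δ)) :=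
          mul_lt_mul_of_pos_left hρ_lt (exp_pos _)
      _ = 1 := by rw [← exp_add, add_neg_cancel, exp_zero]

lemma inv_le_inv_pow_mul_exp_neg_mul {ρ b δ y : ℝ} {n : ℕ} (hn : 1 ≤ n) (hρ : 0 < ρ)
    (hb : 0 ≤ b) (hr : exp (b * δ) * ρ < 1) (hy : y < n * δ) :
    (exp (b * δ) * ρ)⁻¹ ≤ ρ⁻¹ ^ n * exp (-(b * y)) := by
  calc (exp (b * δ) * ρ)⁻¹ ≤ (exp (b * δ) * ρ)⁻¹ ^ n :=
        le_self_pow₀ ((one_le_inv₀ (by positivity)).2 hr.le) (by omega)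
    _ = ρ⁻¹ ^ n * exp (-(b * (n * δ))) := by
        rw [mul_inv, ← exp_neg, mul_pow, ← exp_nat_mul]; ring_nf
    _ ≤ ρ⁻¹ ^ n * exp (-(b * y)) := by
        refine mul_le_mul_of_nonneg_left (exp_le_exp.2 ?_) (by positivity)
        exact neg_le_neg (mul_le_mul_of_nonneg_left hy.le hb)

namespace MeasureTheory

variable {Ω : Type*} {m mΩ : MeasurableSpace Ω} {μ : Measure Ω}

lemma le_of_le_condExp_of_abs_le [IsFiniteMeasure μ] [NeZero μ] (hm : m ≤ mΩ) {Y : Ω → ℝ}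
    {a ε : ℝ} (hY : Integrable Y μ) (hbdd : ∀ᵐ ω ∂μ, |Y ω| ≤ a)
    (hε : ∀ᵐ ω ∂μ, ε ≤ μ[Y|m] ω) : ε ≤ a := by
  have hle : μ[Y|m] ≤ᵐ[μ] μ[fun _ => a|m] :=
    condExp_mono hY (integrable_const a) (hbdd.mono fun ω hω => (abs_le.1 hω).2)
  rw [condExp_const hm] at hle
  obtain ⟨ω, hεω, hω⟩ := (hε.and hle).exists
  exact hεω.trans hω

lemma condExp_exp_neg_mul_le [IsFiniteMeasure μ] (hm : m ≤ mΩ) {Y : Ω → ℝ} {a ε b : ℝ}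
    (hY : AEStronglyMeasurable Y μ) (hbdd : ∀ᵐ ω ∂μ, |Y ω| ≤ a)
    (hε : ∀ᵐ ω ∂μ, ε ≤ μ[Y|m] ω) (hb : 0 ≤ b) (hba : b * a ≤ 1) :
    μ[fun ω => exp (-(b * Y ω))|m] ≤ᵐ[μ] fun _ => 1 - b * ε + b ^ 2 * a ^ 2 := by
  have hYint : Integrable Y μ := .of_bound hY a hbdd
  set c := 1 + b ^ 2 * a ^ 2
  have hlin : μ[fun ω => c - b * Y ω|m] =ᵐ[μ] fun ω => c - b * μ[Y|m] ω := by
    filter_upwards [condExp_sub (integrable_const c) (hYint.const_mul b) m,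
      condExp_smul (μ := μ) b Y m] with ω hsub hsmul
    rw [condExp_const hm] at hsub
    exact hsub.trans (congrArg (c - ·) hsmul)
  have hexp_le : (fun ω => exp (-(b * Y ω))) ≤ᵐ[μ] fun ω => c - b * Y ω :=
    hbdd.mono fun ω hω => exp_neg_mul_le_of_abs_le hω hb hba
  have hexp_int : Integrable (fun ω => exp (-(b * Y ω))) μ := by
    refine .of_bound (by fun_prop) (exp (b * a)) (hbdd.mono fun ω hω => ?_)
    rw [norm_eq_abs, abs_exp, exp_le_exp, neg_le, ← mul_neg]
    exact mul_le_mul_of_nonneg_left (neg_le_of_abs_le hω) hb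
  filter_upwards [condExp_mono (m := m) hexp_int ((integrable_const c).sub (hYint.const_mul b))
    hexp_le, hlin, hε] with ω hmono hlinω hεω
  have := hmono.trans_eq hlinω
  nlinarith

lemma supermartingale_inv_pow_mul_exp [IsFiniteMeasure μ] {F : Filtration ℕ mΩ}
    {Z : ℕ → Ω → ℝ} {ρ C : ℝ} (hρ : 0 < ρ) (hZ : StronglyAdapted F Z)
    (hZ0 : Integrable (fun ω => exp (Z 0 ω)) μ)
    (hinc : ∀ n, ∀ᵐ ω ∂μ, |Z (n + 1) ω - Z n ω| ≤ C)
    (hcond : ∀ n, μ[fun ω => exp (Z (n + 1) ω - Z n ω)|F n] ≤ᵐ[μ] fun _ => ρ) :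
    Supermartingale (fun n ω => ρ⁻¹ ^ n * exp (Z n ω)) F μ := by
  have hZm : ∀ n, StronglyMeasurable (Z n) := fun n => (hZ n).mono (F.le n)
  have hinc_meas : ∀ n, StronglyMeasurable (fun ω => exp (Z (n + 1) ω - Z n ω)) := fun n =>
    continuous_exp.comp_stronglyMeasurable ((hZm (n + 1)).sub (hZm n))
  have hinc_bdd : ∀ n, ∀ᵐ ω ∂μ, ‖exp (Z (n + 1) ω - Z n ω)‖ ≤ exp C := fun n =>
    (hinc n).mono fun ω hω => by
      rw [norm_eq_abs, abs_exp, exp_le_exp]; exact (le_abs_self _).trans hω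
  have hinc_int : ∀ n, Integrable (fun ω => exp (Z (n + 1) ω - Z n ω)) μ := fun n =>
    .of_bound (hinc_meas n).aestronglyMeasurable _ (hinc_bdd n)
  have hexp_succ : ∀ n ω, exp (Z (n + 1) ω) = exp (Z (n + 1) ω - Z n ω) * exp (Z n ω) :=
    fun n ω => by rw [← exp_add, sub_add_cancel]
  have hexp_int : ∀ n, Integrable (fun ω => exp (Z n ω)) μ := by
    intro n
    induction n with
    | zero => exact hZ0
    | succ n ih =>
      simp_rw [hexp_succ]
      exact ih.bdd_mul (hinc_meas n).aestronglyMeasurable (hinc_bdd n)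
  refine supermartingale_nat (fun n => (continuous_exp.comp_stronglyMeasurable (hZ n)).const_mul _)
    (fun n => (hexp_int n).const_mul _) fun n => ?_
  have hprod : ((fun ω => ρ⁻¹ ^ (n + 1) * exp (Z n ω)) * fun ω => exp (Z (n + 1) ω - Z n ω)) =
      fun ω => ρ⁻¹ ^ (n + 1) * exp (Z (n + 1) ω) := by
    funext ω; rw [Pi.mul_apply, hexp_succ]; ring
  have hpull := condExp_mul_of_stronglyMeasurable_left (m := F n) (μ := μ)
    (((continuous_exp.comp_stronglyMeasurable (hZ n)).const_mul (ρ⁻¹ ^ (n + 1))))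
    (hprod ▸ (hexp_int (n + 1)).const_mul _) (hinc_int n)
  rw [hprod] at hpull
  filter_upwards [hpull, hcond n] with ω hpullω hcondω
  calc μ[fun ω => ρ⁻¹ ^ (n + 1) * exp (Z (n + 1) ω)|F n] ω
      = ρ⁻¹ ^ (n + 1) * exp (Z n ω) * μ[fun ω => exp (Z (n + 1) ω - Z n ω)|F n] ω := hpullω
    _ ≤ ρ⁻¹ ^ (n + 1) * exp (Z n ω) * ρ := by gcongr
    _ = ρ⁻¹ ^ n * exp (Z n ω) := by rw [pow_succ]; field_simp

lemma measure_pos_of_measure_compl_lt {s : Set Ω} (h : μ sᶜ < μ Set.univ) : 0 < μ s := by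
  refine pos_iff_ne_zero.2 fun hs => ?_
  have hcover := measure_univ_le_add_compl (μ := μ) s
  rw [hs, zero_add] at hcover
  exact (hcover.trans_lt h).false

lemma Supermartingale.mul_measureReal_exists_ge_le [IsFiniteMeasure μ] {F : Filtration ℕ mΩ}
    {T : ℕ → Ω → ℝ} (hT : Supermartingale T F μ) (hnonneg : ∀ n, 0 ≤ᵐ[μ] T n) (c : ℝ) (N : ℕ) :
    c * μ.real {ω | ∃ n ≤ N, c ≤ T n ω} ≤ ∫ ω, T 0 ω ∂μ := by
  set τ : Ω → ℕ := hittingBtwn T (Set.Ici c) 0 N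
  have hτ : IsStoppingTime F (fun ω => (τ ω : ℕ∞)) :=
    hT.stronglyAdapted.adapted.isStoppingTime_hittingBtwn measurableSet_Ici
  have hτN : ∀ ω, (τ ω : ℕ∞) ≤ N := fun ω => mod_cast hittingBtwn_le ω
  have hint : Integrable (stoppedValue T (τ ·)) μ := integrable_stoppedValue ℕ hτ hT.integrable hτN
  have hmeas : MeasurableSet {ω | ∃ n ≤ N, c ≤ T n ω} := by
    simp only [Set.ofPred_exists]
    exact .iUnion fun n => (MeasurableSet.const _).inter <| measurableSet_le measurable_const
      ((hT.stronglyAdapted n).mono (F.le n)).measurable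
  have hge : ∀ ω ∈ {ω | ∃ n ≤ N, c ≤ T n ω}, c ≤ stoppedValue T (τ ·) ω :=
    fun ω ⟨n, hn, hcn⟩ => stoppedValue_hittingBtwn_mem ⟨n, ⟨zero_le, hn⟩, hcn⟩
  have hstopped_nonneg : 0 ≤ᵐ[μ] stoppedValue T (τ ·) := by
    filter_upwards [ae_all_iff.2 hnonneg] with ω hω using hω _
  have hoptional : ∫ ω, stoppedValue T (τ ·) ω ∂μ ≤ ∫ ω, T 0 ω ∂μ := by
    have := hT.neg.expected_stoppedValue_mono (isStoppingTime_const F 0) hτ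
      (fun ω => WithTop.coe_le_coe.2 (Nat.zero_le (τ ω))) hτN
    change ∫ ω, -T 0 ω ∂μ ≤ ∫ ω, -stoppedValue T (τ ·) ω ∂μ at this
    rwa [integral_neg, integral_neg, neg_le_neg_iff] at this
  calc c * μ.real {ω | ∃ n ≤ N, c ≤ T n ω}
      ≤ ∫ ω in {ω | ∃ n ≤ N, c ≤ T n ω}, stoppedValue T (τ ·) ω ∂μ :=
        setIntegral_ge_of_const_le_real hmeas (measure_ne_top _ _) hge hint.integrableOn
    _ ≤ ∫ ω, stoppedValue T (τ ·) ω ∂μ := setIntegral_le_integral hint hstopped_nonneg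
    _ ≤ ∫ ω, T 0 ω ∂μ := hoptional

lemma Supermartingale.measure_exists_ge_le [IsFiniteMeasure μ] {F : Filtration ℕ mΩ}
    {T : ℕ → Ω → ℝ} (hT : Supermartingale T F μ) (hnonneg : ∀ n, 0 ≤ᵐ[μ] T n) {c : ℝ}
    (hc : 0 < c) : μ {ω | ∃ n, c ≤ T n ω} ≤ ENNReal.ofReal ((∫ ω, T 0 ω ∂μ) / c) := by
  have hmono : Monotone fun N => {ω | ∃ n ≤ N, c ≤ T n ω} :=
    fun N M hNM ω ⟨n, hn, hcn⟩ => ⟨n, hn.trans hNM, hcn⟩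
  have hunion : {ω | ∃ n, c ≤ T n ω} = ⋃ N, {ω | ∃ n ≤ N, c ≤ T n ω} := by
    ext ω
    simp only [Set.mem_ofPred_eq, Set.mem_iUnion]
    exact ⟨fun ⟨n, hcn⟩ => ⟨n, n, le_rfl, hcn⟩, fun ⟨_, n, _, hcn⟩ => ⟨n, hcn⟩⟩
  rw [hunion, hmono.measure_iUnion]
  refine iSup_le fun N => ?_
  rw [← ofReal_measureReal]
  exact ENNReal.ofReal_le_ofReal <|
    (le_div_iff₀ hc).2 <| (mul_comm _ _).trans_le (hT.mul_measureReal_exists_ge_le hnonneg c N)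

lemma supermartingale_inv_pow_mul_exp_neg_mul [IsFiniteMeasure μ] {F : Filtration ℕ mΩ}
    {X : ℕ → Ω → ℝ} {a ε b : ℝ} (hadp : Adapted F X)
    (hinc_int : ∀ n, Integrable (fun ω => X (n + 1) ω - X n ω) μ)
    (hbdd : ∀ n, ∀ᵐ ω ∂μ, |X (n + 1) ω - X n ω| ≤ a)
    (hdrift : ∀ n, ∀ᵐ ω ∂μ, ε ≤ μ[fun ω => X (n + 1) ω - X n ω|F n] ω)
    (hb : 0 ≤ b) (hba : b * a ≤ 1) (hρ : 0 < 1 - b * ε + b ^ 2 * a ^ 2) :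
    Supermartingale (fun n ω => (1 - b * ε + b ^ 2 * a ^ 2)⁻¹ ^ n *
      exp (-(b * (X n ω - X 0 ω)))) F μ := by
  have hinc_eq : ∀ n ω, -(b * (X (n + 1) ω - X 0 ω)) - -(b * (X n ω - X 0 ω)) =
      -(b * (X (n + 1) ω - X n ω)) := fun n ω => by ring
  refine supermartingale_inv_pow_mul_exp (C := b * a) hρ
    (fun n => ((hadp.stronglyAdapted n).sub
      ((hadp.stronglyAdapted 0).mono (F.mono (Nat.zero_le n)))).const_mul b |>.neg)
    (by simp) (fun n => (hbdd n).mono fun ω hω => ?_) fun n => ?_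
  · rw [hinc_eq, abs_neg, abs_mul, abs_of_nonneg hb]
    exact mul_le_mul_of_nonneg_left hω hb
  · simp_rw [hinc_eq]
    exact condExp_exp_neg_mul_le (F.le n) (hinc_int n).aestronglyMeasurable (hbdd n) (hdrift n)
      hb hba

end MeasureTheory

theorem stmt_7_general {Ω : Type*} {mΩ : MeasurableSpace Ω} {μ : Measure Ω}
    [IsProbabilityMeasure μ] (F : Filtration ℕ mΩ)
    (X : ℕ → Ω → ℝ) (hadp : Adapted F X)
    (hint : ∀ n, Integrable (X n) μ)
    (x a ε : ℝ) (hε : 0 < ε)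
    (hX0 : ∀ ω, X 0 ω = x)
    (hbdd : ∀ n : ℕ, ∀ᵐ ω ∂μ, |X (n + 1) ω - X n ω| ≤ a)
    (hsub : ∀ n : ℕ, ∀ᵐ ω ∂μ,
      ε ≤ (μ[(fun ω' => X (n + 1) ω' - X n ω') | F n]) ω) :
    ∃ δ₁ > 0, ∀ δ, 0 < δ → δ < δ₁ →
      0 < μ {ω | ∀ n : ℕ, 1 ≤ n → x + n * δ ≤ X n ω} := by
  have hinc_int : ∀ n, Integrable (fun ω => X (n + 1) ω - X n ω) μ :=
    fun n => (hint (n + 1)).sub (hint n)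
  obtain ⟨b, hb, hba, hρ, hrate⟩ := exists_chernoff_exponent hε
    (le_of_le_condExp_of_abs_le (F.le 0) (hinc_int 0) (hbdd 0) (hsub 0))
  set ρ := 1 - b * ε + b ^ 2 * a ^ 2
  set T : ℕ → Ω → ℝ := fun n ω => ρ⁻¹ ^ n * exp (-(b * (X n ω - X 0 ω)))
  have hT : Supermartingale T F μ :=
    supermartingale_inv_pow_mul_exp_neg_mul hadp hinc_int hbdd hsub hb.le hba hρ
  refine ⟨ε / 2, by positivity, fun δ _ hδ => measure_pos_of_measure_compl_lt ?_⟩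
  have hr := hrate δ hδ
  calc μ {ω | ∀ n : ℕ, 1 ≤ n → x + n * δ ≤ X n ω}ᶜ
      ≤ μ {ω | ∃ n, (exp (b * δ) * ρ)⁻¹ ≤ T n ω} := by
        refine measure_mono fun ω hω => ?_
        simp only [Set.mem_compl_iff, Set.mem_ofPred_eq, not_forall, not_le] at hω
        obtain ⟨n, hn, hlt⟩ := hω
        exact ⟨n, inv_le_inv_pow_mul_exp_neg_mul hn hρ hb.le hr (by rw [hX0]; linarith)⟩
    _ ≤ ENNReal.ofReal ((∫ ω, T 0 ω ∂μ) / (exp (b * δ) * ρ)⁻¹) :=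
        hT.measure_exists_ge_le (fun n => ae_of_all _ fun ω => by positivity) (by positivity)
    _ < μ Set.univ := by simpa [T] using hr

/-- a strong submartingale with uniformly bounded increments
(`|X_n − X_{n−1}| ≤ a` and `E(X_n − X_{n−1} | F_{n−1}) ≥ ε > 0`) drifts linearly with
positive probability: there is `δ₁ > 0` such that for every `0 < δ < δ₁` the stopping
time `τ(δ) = inf{n ≥ 1 : X_n < x + nδ}` is infinite with positive probability. -/
theorem stmt_7 {Ω : Type*} {mΩ : MeasurableSpace Ω} {μ : Measure Ω}
    [IsProbabilityMeasure μ] (F : Filtration ℕ mΩ)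
    (X : ℕ → Ω → ℝ) (hadp : Adapted F X)
    (hint : ∀ n, Integrable (X n) μ)
    (x a ε : ℝ) (ha : 0 < a) (hε : 0 < ε)
    (hX0 : ∀ ω, X 0 ω = x)
    (hbdd : ∀ n : ℕ, ∀ᵐ ω ∂μ, |X (n + 1) ω - X n ω| ≤ a)
    (hsub : ∀ n : ℕ, ∀ᵐ ω ∂μ,
      ε ≤ (μ[(fun ω' => X (n + 1) ω' - X n ω') | F n]) ω) :
    ∃ δ₁ > 0, ∀ δ, 0 < δ → δ < δ₁ →
      0 < μ {ω | ∀ n : ℕ, 1 ≤ n → x + n * δ ≤ X n ω} :=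
  stmt_7_general F X hadp hint x a ε hε hX0 hbdd hsub
end

section
/- Let (X_n) be adapted to (F_n) with X_0 = x, increments Y_n = X_n − X_{n−1} bounded by |Y_n| ≤ a, and E(Y_n | F_{n−1}) ≥ ε > 0 a.s. Then for h ∈ (0, min(1/a, 2ε/(3a²))) and δ < (hε − 3h²a²/2)/h, there is δ₃ > 0 such that P(X_n < x + δn) ≤ exp(−nδ₃) for all n ≥ 1. -/
open MeasureTheory ProbabilityTheory Real

/-!
Write `κ = hε - h²a²`. For `|z| ≤ 1` we have `eᶻ ≤ 1 + z + z²`, so with `Yₖ₊₁ = Xₖ₊₁ - Xₖ`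
the drift condition gives `E[e^{-hYₖ₊₁} | Fₖ] ≤ 1 - hε + h²a² ≤ e^{-κ}`. Pulling the
`Fₖ`-measurable factor `e^{-h(Xₖ - x)}` out of the conditional expectation and iterating yields
`E e^{-h(Xₙ - x)} ≤ e^{-nκ}`, and Markov's inequality for `e^{-h(Xₙ - x)}` bounds
`P(Xₙ < x + nδ)` by `e^{-n(κ - hδ)}`. As `h²a² ≤ 3h²a²/2`, the hypothesis on `δ` makes
`κ - hδ` positive.
-/

lemma Real.exp_le_one_add_add_sq {z : ℝ} (hz : |z| ≤ 1) : exp z ≤ 1 + z + z ^ 2 := by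
  linarith [le_abs_self (exp z - 1 - z), abs_exp_sub_one_sub_id_le hz]

section

variable {Ω : Type*} {m m0 : MeasurableSpace Ω} {μ : Measure Ω}

lemma ae_norm_exp_mul_le {Y : Ω → ℝ} {a : ℝ} (hYa : ∀ᵐ ω ∂μ, |Y ω| ≤ a) (t : ℝ) :
    ∀ᵐ ω ∂μ, ‖exp (t * Y ω)‖ ≤ exp (|t| * a) := by
  filter_upwards [hYa] with ω hω
  rw [norm_of_nonneg (exp_pos _).le, exp_le_exp]
  calc t * Y ω ≤ |t| * |Y ω| := by rw [← abs_mul]; exact le_abs_self _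
    _ ≤ |t| * a := mul_le_mul_of_nonneg_left hω (abs_nonneg t)

lemma integrable_exp_mul_of_abs_le [IsFiniteMeasure μ] {Y : Ω → ℝ} {a : ℝ}
    (hY : AEStronglyMeasurable Y μ) (hYa : ∀ᵐ ω ∂μ, |Y ω| ≤ a) (t : ℝ) :
    Integrable (fun ω => exp (t * Y ω)) μ :=
  .of_bound (continuous_exp.comp_aestronglyMeasurable (hY.const_mul t)) _
    (ae_norm_exp_mul_le hYa t)

lemma condExp_exp_neg_mul_le [IsFiniteMeasure μ] (hm : m ≤ m0) {Y : Ω → ℝ} {a ε h : ℝ}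
    (hY : AEStronglyMeasurable Y μ) (hYa : ∀ᵐ ω ∂μ, |Y ω| ≤ a)
    (hYε : ∀ᵐ ω ∂μ, ε ≤ μ[Y | m] ω) (hh : 0 ≤ h) (hha : h * a ≤ 1) :
    μ[fun ω => exp (-h * Y ω) | m] ≤ᵐ[μ] fun _ => exp (-(h * ε - h ^ 2 * a ^ 2)) := by
  set b := 1 + h ^ 2 * a ^ 2
  have hYint : Integrable Y μ := .of_bound hY a (by simpa only [norm_eq_abs] using hYa)
  have hquad : (fun ω => exp (-h * Y ω)) ≤ᵐ[μ] fun ω => b - h * Y ω := by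
    filter_upwards [hYa] with ω hω
    have hz : |-h * Y ω| ≤ 1 := by
      rw [abs_mul, abs_neg, abs_of_nonneg hh]
      nlinarith [abs_nonneg (Y ω)]
    have hY2 : Y ω ^ 2 ≤ a ^ 2 := by nlinarith [sq_abs (Y ω), abs_nonneg (Y ω)]
    nlinarith [exp_le_one_add_add_sq hz, mul_le_mul_of_nonneg_left hY2 (sq_nonneg h)]
  have hlin : μ[fun ω => b - h * Y ω | m] =ᵐ[μ] fun ω => b - h * μ[Y | m] ω := by
    rw [show (fun ω => b - h * Y ω) = (fun _ => b) - h • Y from rfl]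
    filter_upwards [condExp_sub (integrable_const b) (hYint.smul h) m, condExp_smul h Y m]
      with ω hsub hsmul
    simpa [condExp_const hm, hsmul] using hsub
  filter_upwards [condExp_mono (integrable_exp_mul_of_abs_le hY hYa (-h))
    ((integrable_const b).sub (hYint.const_mul h)) hquad, hlin, hYε] with ω hmono hω hε
  calc μ[fun ω => exp (-h * Y ω) | m] ω ≤ b - h * μ[Y | m] ω := hmono.trans_eq hω
    _ ≤ -(h * ε - h ^ 2 * a ^ 2) + 1 := by nlinarith
    _ ≤ exp (-(h * ε - h ^ 2 * a ^ 2)) := add_one_le_exp _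

lemma integral_mul_le_of_condExp_le [IsFiniteMeasure μ] (hm : m ≤ m0) {Z W : Ω → ℝ} {C c : ℝ}
    (hZm : StronglyMeasurable[m] Z) (hZ0 : 0 ≤ᵐ[μ] Z) (hZC : ∀ᵐ ω ∂μ, ‖Z ω‖ ≤ C)
    (hW : Integrable W μ) (hWc : μ[W | m] ≤ᵐ[μ] fun _ => c) :
    ∫ ω, Z ω * W ω ∂μ ≤ c * ∫ ω, Z ω ∂μ := by
  have hZ : AEStronglyMeasurable Z μ := (hZm.mono hm).aestronglyMeasurable
  calc ∫ ω, Z ω * W ω ∂μ = ∫ ω, μ[Z * W | m] ω ∂μ := (integral_condExp hm).symm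
    _ = ∫ ω, Z ω * μ[W | m] ω ∂μ :=
      integral_congr_ae (condExp_mul_of_stronglyMeasurable_left hZm (hW.bdd_mul hZ hZC) hW)
    _ ≤ ∫ ω, Z ω * c ∂μ := by
      refine integral_mono_ae (integrable_condExp.bdd_mul hZ hZC)
        ((Integrable.of_bound hZ C hZC).mul_const c) ?_
      filter_upwards [hZ0, hWc] with ω h0 hc
      exact mul_le_mul_of_nonneg_left hc h0
    _ = c * ∫ ω, Z ω ∂μ := by rw [integral_mul_const, mul_comm]

lemma ae_abs_sub_zero_le_mul {X : ℕ → Ω → ℝ} {a : ℝ}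
    (hbdd : ∀ n : ℕ, ∀ᵐ ω ∂μ, |X (n + 1) ω - X n ω| ≤ a) (n : ℕ) :
    ∀ᵐ ω ∂μ, |X n ω - X 0 ω| ≤ n * a := by
  induction n with
  | zero => simp
  | succ n ih =>
    filter_upwards [hbdd n, ih] with ω hstep hn
    push_cast
    linarith [abs_sub_le (X (n + 1) ω) (X n ω) (X 0 ω)]

theorem mgf_sub_zero_le_exp [IsProbabilityMeasure μ] (F : Filtration ℕ m0) {X : ℕ → Ω → ℝ}
    (hadp : Adapted F X) {a ε h : ℝ} (hbdd : ∀ n : ℕ, ∀ᵐ ω ∂μ, |X (n + 1) ω - X n ω| ≤ a)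
    (hsub : ∀ n : ℕ, ∀ᵐ ω ∂μ, ε ≤ (μ[(fun ω' => X (n + 1) ω' - X n ω') | F n]) ω)
    (hh : 0 ≤ h) (hha : h * a ≤ 1) (n : ℕ) :
    mgf (fun ω => X n ω - X 0 ω) μ (-h) ≤ exp (-(n * (h * ε - h ^ 2 * a ^ 2))) := by
  induction n with
  | zero => simp
  | succ n ih =>
    set κ := h * ε - h ^ 2 * a ^ 2
    have hX0 : Measurable[F n] (X 0) := (hadp 0).mono (F.mono n.zero_le) le_rfl
    have hZ : Measurable[F n] fun ω => exp (-h * (X n ω - X 0 ω)) :=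
      measurable_exp.comp (((hadp n).sub hX0).const_mul (-h))
    have hXk : ∀ k, Measurable (X k) := fun k => (hadp k).mono (F.le k) le_rfl
    have hY : AEStronglyMeasurable (fun ω => X (n + 1) ω - X n ω) μ :=
      ((hXk (n + 1)).sub (hXk n)).aestronglyMeasurable
    calc mgf (fun ω => X (n + 1) ω - X 0 ω) μ (-h)
        = ∫ ω, exp (-h * (X n ω - X 0 ω)) * exp (-h * (X (n + 1) ω - X n ω)) ∂μ := by
          simp only [mgf, ← exp_add]
          congr with ω
          ring_nf
      _ ≤ exp (-κ) * mgf (fun ω => X n ω - X 0 ω) μ (-h) :=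
          integral_mul_le_of_condExp_le (F.le n) hZ.stronglyMeasurable
            (ae_of_all _ fun ω => (exp_pos _).le)
            (ae_norm_exp_mul_le (ae_abs_sub_zero_le_mul hbdd n) _)
            (integrable_exp_mul_of_abs_le hY (hbdd n) (-h))
            (condExp_exp_neg_mul_le (F.le n) hY (hbdd n) (hsub n) hh hha)
      _ ≤ exp (-κ) * exp (-(n * κ)) := by gcongr
      _ = exp (-((n + 1 : ℕ) * κ)) := by rw [← exp_add]; push_cast; ring_nf

end

theorem stmt_8_general {Ω : Type*} {mΩ : MeasurableSpace Ω} {μ : Measure Ω}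
    [IsProbabilityMeasure μ] (F : Filtration ℕ mΩ)
    (X : ℕ → Ω → ℝ) (hadp : Adapted F X)
    (x a ε : ℝ) (ha : 0 < a)
    (hX0 : ∀ ω, X 0 ω = x)
    (hbdd : ∀ n : ℕ, ∀ᵐ ω ∂μ, |X (n + 1) ω - X n ω| ≤ a)
    (hsub : ∀ n : ℕ, ∀ᵐ ω ∂μ,
      ε ≤ (μ[(fun ω' => X (n + 1) ω' - X n ω') | F n]) ω)
    (h δ : ℝ) (hh0 : 0 < h) (hh1 : h < min (1 / a) (2 * ε / (3 * a ^ 2)))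
    (hδ : δ < (h * ε - 3 * h ^ 2 * a ^ 2 / 2) / h) :
    ∃ δ₃ > 0, ∀ n : ℕ, 1 ≤ n →
      μ {ω | X n ω < x + n * δ} ≤ ENNReal.ofReal (Real.exp (-(n * δ₃))) := by
  have hha : h * a ≤ 1 := ((lt_div_iff₀ ha).1 (hh1.trans_le (min_le_left _ _))).le
  refine ⟨h * ε - h ^ 2 * a ^ 2 - h * δ, ?_, fun n _ => ?_⟩
  · rw [lt_div_iff₀ hh0] at hδ
    nlinarith [sq_nonneg (h * a)]
  have hS : AEStronglyMeasurable (fun ω => X n ω - X 0 ω) μ :=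
    (((hadp n).mono (F.le n) le_rfl).sub ((hadp 0).mono (F.le 0) le_rfl)).aestronglyMeasurable
  have hchernoff := measure_le_le_exp_mul_mgf (n * δ) (neg_nonpos.2 hh0.le)
    (integrable_exp_mul_of_abs_le hS (ae_abs_sub_zero_le_mul hbdd n) (-h))
  calc μ {ω | X n ω < x + n * δ} ≤ μ {ω | X n ω - X 0 ω ≤ n * δ} :=
        measure_mono fun ω (hω : X n ω < x + n * δ) =>
          show X n ω - X 0 ω ≤ n * δ by rw [hX0]; linarith
    _ = ENNReal.ofReal (μ.real {ω | X n ω - X 0 ω ≤ n * δ}) :=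
        (ofReal_measureReal (measure_ne_top _ _)).symm
    _ ≤ ENNReal.ofReal (exp (-(n * (h * ε - h ^ 2 * a ^ 2 - h * δ)))) := by
        refine ENNReal.ofReal_le_ofReal (hchernoff.trans ?_)
        calc exp (-(-h) * (n * δ)) * mgf (fun ω => X n ω - X 0 ω) μ (-h)
            ≤ exp (h * (n * δ)) * exp (-(n * (h * ε - h ^ 2 * a ^ 2))) := by
              rw [neg_neg]
              exact mul_le_mul_of_nonneg_left
                (mgf_sub_zero_le_exp F hadp hbdd hsub hh0.le hha n) (exp_pos _).le
          _ = _ := by rw [← exp_add]; ring_nf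

/-- exponential Chernoff bound for a strong submartingale with bounded
increments: for `h ∈ (0, min(1/a, 2ε/(3a²)))` and `δ < (hε − 3h²a²/2)/h` there is
`δ₃ > 0` with `P(X_n < x + nδ) ≤ exp(−nδ₃)` for all `n ≥ 1`. -/
theorem stmt_8 {Ω : Type*} {mΩ : MeasurableSpace Ω} {μ : Measure Ω}
    [IsProbabilityMeasure μ] (F : Filtration ℕ mΩ)
    (X : ℕ → Ω → ℝ) (hadp : Adapted F X)
    (hint : ∀ n, Integrable (X n) μ)
    (x a ε : ℝ) (ha : 0 < a) (hε : 0 < ε)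
    (hX0 : ∀ ω, X 0 ω = x)
    (hbdd : ∀ n : ℕ, ∀ᵐ ω ∂μ, |X (n + 1) ω - X n ω| ≤ a)
    (hsub : ∀ n : ℕ, ∀ᵐ ω ∂μ,
      ε ≤ (μ[(fun ω' => X (n + 1) ω' - X n ω') | F n]) ω)
    (h δ : ℝ) (hh0 : 0 < h) (hh1 : h < min (1 / a) (2 * ε / (3 * a ^ 2)))
    (hδ : δ < (h * ε - 3 * h ^ 2 * a ^ 2 / 2) / h) :
    ∃ δ₃ > 0, ∀ n : ℕ, 1 ≤ n →
      μ {ω | X n ω < x + n * δ} ≤ ENNReal.ofReal (Real.exp (-(n * δ₃))) :=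
  stmt_8_general F X hadp x a ε ha hX0 hbdd hsub h δ hh0 hh1 hδ
end

section
/- Let η₁, …, η_d be non-negative random variables with E η_i < ∞, define f(x) = ∑_{i=1}^d E(η_i^x) for x ∈ [0,1], and suppose there exists x₀ ∈ [0,1] with f(x₀) < 1. Let ξ[v] for a vertex v of the rooted d-ary tree be the product of independent copies of the η's along the path from the root to v (the copy at an edge with last letter j is distributed like η_j, copies at different edges of a path being independent). Then ∑_{v ∈ V} ξ[v] < ∞ almost surely, where the sum is over all vertices of the infinite d-ary tree. -/
open MeasureTheory ProbabilityTheory Finset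
open scoped ENNReal

/-!
By independence along each path, `E[ξ[v]^x₀] = ∏ E[η_{v_k}^x₀]`, so summing over the words of
length `n` gives `f(x₀)^n` and `E[∑_v ξ[v]^x₀] = ∑_n f(x₀)^n < ∞`. Hence a.s. `∑_v ξ[v]^x₀ < ∞`;
then `ξ[v] < 1` for all but finitely many `v`, and for those `ξ[v] ≤ ξ[v]^x₀` because `x₀ ≤ 1`.
-/

theorem tsum_list_prod_map_eq_tsum_pow {α : Type*} [Fintype α] (c : α → ℝ≥0∞) :
    ∑' v : List α, (v.map c).prod = ∑' n : ℕ, (∑ a, c a) ^ n := by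
  rw [← (List.equivSigmaTuple (α := α)).symm.tsum_eq, ENNReal.tsum_sigma']
  refine tsum_congr fun n => ?_
  change ∑' f : Fin n → α, ((List.ofFn f).map c).prod = _
  rw [tsum_fintype]
  simp only [List.map_ofFn, List.prod_ofFn, Function.comp_apply]
  rw [← Fintype.prod_sum, prod_const, card_univ, Fintype.card_fin]

theorem Summable.of_rpow_of_le_one {ι : Type*} {X : ι → ℝ} {p : ℝ} (hX : ∀ i, 0 ≤ X i)
    (hp₀ : 0 ≤ p) (hp₁ : p ≤ 1) (h : Summable fun i => X i ^ p) : Summable X := by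
  refine .of_norm_bounded_eventually h ?_
  filter_upwards [h.tendsto_cofinite_zero.eventually (gt_mem_nhds one_pos)] with i hi
  have hXi : X i ≤ 1 := by
    by_contra! h1
    exact hi.not_ge (Real.one_le_rpow h1.le hp₀)
  rw [Real.norm_of_nonneg (hX i)]
  rcases (hX i).eq_or_lt with h0 | h0
  · rw [← h0]; exact Real.rpow_nonneg le_rfl p
  · simpa using Real.rpow_le_rpow_of_exponent_ge h0 hXi hp₁

theorem lintegral_ofReal_prod_rpow_of_iIndepFun {Ω ι : Type*} {mΩ : MeasurableSpace Ω}
    {μ : Measure Ω} {X : ι → Ω → ℝ} (hX : ∀ i, Measurable (X i)) (hX₀ : ∀ i ω, 0 ≤ X i ω)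
    (hind : iIndepFun X μ) (s : Finset ι) (p : ℝ) :
    ∫⁻ ω, ENNReal.ofReal ((∏ i ∈ s, X i ω) ^ p) ∂μ
      = ∏ i ∈ s, ∫⁻ ω, ENNReal.ofReal (X i ω ^ p) ∂μ := by
  have hφ : Measurable fun t : ℝ => ENNReal.ofReal (t ^ p) := by fun_prop
  simp_rw [← Real.finsetProd_rpow _ _ (fun i _ => hX₀ i _),
    ENNReal.ofReal_prod_of_nonneg (fun i _ => Real.rpow_nonneg (hX₀ i _) p)]
  exact lintegral_prod_eq_prod_lintegral_of_indepFun s _ (hind.comp _ fun _ => hφ)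
    fun i => hφ.comp (hX i)

theorem stmt_10_general {Ω : Type*} {mΩ : MeasurableSpace Ω} {μ : Measure Ω}
    [IsProbabilityMeasure μ] (d : ℕ) [NeZero d]
    (η : Fin d → Ω → ℝ)
    (hηmeas : ∀ i, Measurable (η i))
    (x₀ : ℝ) (hx₀ : x₀ ∈ Set.Icc (0 : ℝ) 1)
    (hsub : ∑ i, ∫⁻ ω, ENNReal.ofReal (η i ω ^ x₀) ∂μ < 1)
    (ξa : List (Fin d) → Ω → ℝ)
    (hξmeas : ∀ v, Measurable (ξa v))
    (hξpos : ∀ v ω, 0 ≤ ξa v ω)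
    (hlaw : ∀ v : List (Fin d), v ≠ [] →
      Measure.map (ξa v) μ = Measure.map (η v.headI) μ)
    (hindep : ∀ v : List (Fin d),
      ProbabilityTheory.iIndepFun
        (fun k : Fin v.length => ξa (v.drop k)) μ) :
    ∀ᵐ ω ∂μ, Summable (fun v : List (Fin d) =>
      ∏ k ∈ Finset.range v.length, ξa (v.drop k) ω) := by
  set c : Fin d → ℝ≥0∞ := fun i => ∫⁻ ω, ENNReal.ofReal (η i ω ^ x₀) ∂μ
  have hedge : ∀ v : List (Fin d), v ≠ [] →
      ∫⁻ ω, ENNReal.ofReal (ξa v ω ^ x₀) ∂μ = c v.headI := fun v hv =>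
    (IdentDistrib.comp ⟨(hξmeas v).aemeasurable, (hηmeas _).aemeasurable, hlaw v hv⟩
      (by fun_prop : Measurable fun t : ℝ => ENNReal.ofReal (t ^ x₀))).lintegral_eq
  have hpath : ∀ v : List (Fin d), ∫⁻ ω, ENNReal.ofReal
      ((∏ k ∈ range v.length, ξa (v.drop k) ω) ^ x₀) ∂μ = (v.map c).prod := by
    intro v
    simp_rw [← Fin.prod_univ_eq_prod_range fun k => ξa (v.drop k) _]
    rw [lintegral_ofReal_prod_rpow_of_iIndepFun (fun _ => hξmeas _) (fun _ => hξpos _)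
      (hindep v), ← Fin.prod_univ_fun_getElem]
    refine prod_congr rfl fun k _ => ?_
    rw [List.drop_eq_getElem_cons k.isLt, hedge _ (List.cons_ne_nil _ _), List.headI_cons]
  have hmoment : ∫⁻ ω, ∑' v : List (Fin d), ENNReal.ofReal
      ((∏ k ∈ range v.length, ξa (v.drop k) ω) ^ x₀) ∂μ ≠ ∞ := by
    rw [lintegral_tsum fun v => by fun_prop, tsum_congr hpath, tsum_list_prod_map_eq_tsum_pow,
      ENNReal.tsum_geometric]
    exact ENNReal.inv_ne_top.2 (tsub_pos_of_lt hsub).ne'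
  filter_upwards [ae_lt_top' (by fun_prop) hmoment] with ω hω
  have hpos : ∀ v : List (Fin d), 0 ≤ ∏ k ∈ range v.length, ξa (v.drop k) ω :=
    fun v => prod_nonneg fun k _ => hξpos _ ω
  refine .of_rpow_of_le_one hpos hx₀.1 hx₀.2 ((ENNReal.summable_toReal hω.ne).congr fun v => ?_)
  exact ENNReal.toReal_ofReal (Real.rpow_nonneg (hpos v) x₀)

/-- subcriticality implies a.s. finiteness of the total chaos sum.
Vertices of the rooted `d`-ary tree are encoded as lists over `Fin d`, written in
reverse (the head of the list is the last letter of the vertex); the edge indexed by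
a nonempty vertex `v` carries a random variable `ξa v` distributed like `η v.headI`,
the variables along any root-to-vertex path being independent.  If
`f(x₀) = ∑_i E(η_i^{x₀}) < 1` for some `x₀ ∈ [0,1]`, then
`∑_{v} ξ[v] < ∞` almost surely, where `ξ[v] = ∏_{edges of the path to v} ξa`. -/
theorem stmt_10 {Ω : Type*} {mΩ : MeasurableSpace Ω} {μ : Measure Ω}
    [IsProbabilityMeasure μ] (d : ℕ) [NeZero d]
    (η : Fin d → Ω → ℝ)
    (hηmeas : ∀ i, Measurable (η i)) (hηpos : ∀ i ω, 0 ≤ η i ω)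
    (hηint : ∀ i, Integrable (η i) μ)
    (x₀ : ℝ) (hx₀ : x₀ ∈ Set.Icc (0 : ℝ) 1)
    (hsub : ∑ i, ∫⁻ ω, ENNReal.ofReal (η i ω ^ x₀) ∂μ < 1)
    (ξa : List (Fin d) → Ω → ℝ)
    (hξmeas : ∀ v, Measurable (ξa v))
    (hξpos : ∀ v ω, 0 ≤ ξa v ω)
    (hlaw : ∀ v : List (Fin d), v ≠ [] →
      Measure.map (ξa v) μ = Measure.map (η v.headI) μ)
    (hindep : ∀ v : List (Fin d),
      ProbabilityTheory.iIndepFun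
        (fun k : Fin v.length => ξa (v.drop k)) μ) :
    ∀ᵐ ω ∂μ, Summable (fun v : List (Fin d) =>
      ∏ k ∈ Finset.range v.length, ξa (v.drop k) ω) :=
  stmt_10_general (mΩ := mΩ) d η hηmeas x₀ hx₀ hsub ξa hξmeas hξpos hlaw hindep
end
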